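/- Suppose (A) and 3-MSP hold and Σ = ⋃_i S_i where each S_i is λ-closed and satisfies the superposition principle. Then the S_i are sectors if and only if each S_i is λ-clopen (both S_i and Σ \ S_i are λ-closed). -/

import Mathlib

universe u v

/-- A state property system: states, a complete lattice of properties, and
the actuality map `xi` assigning to each state the set of actual properties. -/
structure SPS (σ : Type u) (L : Type v) [CompleteLattice L] where
  xi : σ → Set L
  top_mem : ∀ p, ⊤ ∈ xi p
  bot_not_mem : ∀ p, ⊥ ∉ xi p
  sInf_mem : ∀ (p : σ) (A : Set L), (∀ a ∈ A, a ∈ xi p) ↔ sInf A ∈ xi p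
  le_iff : ∀ a b : L, a ≤ b ↔ ∀ r, a ∈ xi r → b ∈ xi r

variable {σ : Type u} {L : Type v} [CompleteLattice L]

/-- λ{p,q} : the set of superpositions of the pair p, q. -/
def SPS.lamPair (S : SPS σ L) (p q : σ) : Set σ := {s | S.xi p ∩ S.xi q ⊆ S.xi s}

/-- A set is λ-closed if it contains λ{p,q} for each pair of its points. -/
def SPS.lamClosed (S : SPS σ L) (T : Set σ) : Prop :=
  ∀ p ∈ T, ∀ q ∈ T, S.lamPair p q ⊆ T

/-- λ(P) : the intersection of all λ-closed sets containing P. -/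
def SPS.lam (S : SPS σ L) (P : Set σ) : Set σ :=
  ⋂₀ {G | S.lamClosed G ∧ P ⊆ G}

/-- The set of superpositions of a set of states. -/
def SPS.bar (S : SPS σ L) (T : Set σ) : Set σ :=
  {p | (⋂ s ∈ T, S.xi s) ⊆ S.xi p}

/-- Property (A): at least two states and `xi` order-reflecting (injective). -/
def SPS.propA (S : SPS σ L) : Prop :=
  (∃ p q : σ, p ≠ q) ∧ ∀ p q : σ, S.xi p ⊆ S.xi q → p = q

/-- p is a minimal superposition of A. -/
def SPS.minSup (S : SPS σ L) (A : Set σ) (p : σ) : Prop :=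
  p ∈ S.bar A ∧ ∀ Q : Set σ, Q ⊂ A → p ∉ S.bar Q

/-- The minimal superposition principle for a given set A. -/
def SPS.MSPon (S : SPS σ L) (A : Set σ) : Prop :=
  ∀ p : σ, S.minSup A p →
    ∀ S₁ S₂ : Set σ, S₁ ⊂ A → S₂ ⊂ A → S₁ ∩ S₂ = ∅ → S₁ ∪ S₂ = A →
      (S.bar (S₁ ∪ {p}) ∩ S.bar S₂).Nonempty

/-- n-MSP : MSP for all sets of cardinality at most n. -/
def SPS.nMSP (S : SPS σ L) (n : ℕ) : Prop :=
  ∀ A : Set σ, A.Finite → A.ncard ≤ n → S.MSPon A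

/-- f-MSP : MSP for all finite sets. -/
def SPS.fMSP (S : SPS σ L) : Prop := ∀ A : Set σ, A.Finite → S.MSPon A

/-- The superposition principle holds on a set T. -/
def SPS.SPon (S : SPS σ L) (T : Set σ) : Prop :=
  ∀ p ∈ T, ∀ q ∈ T, p ≠ q → ∃ r ∈ S.bar {p, q}, r ≠ p ∧ r ≠ q

/-- A sector: a nonempty λ-closed set on which SP holds and which is
superposition-isolated from its complement. -/
def SPS.Sector (S : SPS σ L) (T : Set σ) : Prop :=
  T.Nonempty ∧ S.lamClosed T ∧ S.SPon T ∧
    ∀ p ∈ T, ∀ q, q ∉ T → S.bar {p, q} = ({p, q} : Set σ)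

/-- s ≈ t : s = t or there is a superposition of {s,t} distinct from both. -/
def SPS.rel (S : SPS σ L) (s t : σ) : Prop :=
  s = t ∨ ∃ r ∈ S.bar {s, t}, r ≠ s ∧ r ≠ t

/-
Under (A) and 3-MSP, superpositions of pairs satisfy an exchange law: if `r` is a superposition
of `p ≠ q` other than `p` and `q`, then `r` is a minimal superposition of `{p, q}`, and MSP
applied to the splitting `{p} ∪ {q}` yields `q ∈ λ{p, r}`. With this exchange law, a
λ-closed set `T` is isolated from its complement exactly when `Tᶜ` is λ-closed as well.
-/

namespace SPS

variable (S : SPS σ L)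

theorem bar_pair (p q : σ) : S.bar {p, q} = S.lamPair p q := by
  ext s
  simp [bar, lamPair]

theorem subset_bar (A : Set σ) : A ⊆ S.bar A :=
  fun _ hp => Set.biInter_subset_of_mem hp

theorem bar_mono {A B : Set σ} (h : A ⊆ B) : S.bar A ⊆ S.bar B :=
  fun _ hs => (Set.biInter_mono h fun _ _ => le_rfl).trans hs

theorem bar_empty : S.bar ∅ = ∅ :=
  Set.eq_empty_of_forall_notMem fun s hs =>
    S.bot_not_mem s (hs (by simp : ⊥ ∈ ⋂ t ∈ (∅ : Set σ), S.xi t))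

theorem bar_singleton (hinj : ∀ p q : σ, S.xi p ⊆ S.xi q → p = q) (p : σ) :
    S.bar {p} = {p} := by
  refine Set.Subset.antisymm (fun s hs => (hinj p s ?_).symm) (S.subset_bar _)
  simpa [bar] using hs

theorem minSup_pair (hinj : ∀ p q : σ, S.xi p ⊆ S.xi q → p = q) {p q r : σ}
    (hr : r ∈ S.bar {p, q}) (hrp : r ≠ p) (hrq : r ≠ q) : S.minSup {p, q} r := by
  refine ⟨hr, fun Q hQ hrQ => ?_⟩
  rcases Set.subset_pair_iff_eq.mp hQ.subset with rfl | rfl | rfl | rfl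
  · simp [bar_empty] at hrQ
  · exact hrp (by simpa [S.bar_singleton hinj] using hrQ)
  · exact hrq (by simpa [S.bar_singleton hinj] using hrQ)
  · exact hQ.ne rfl

theorem mem_bar_pair_exchange (hinj : ∀ p q : σ, S.xi p ⊆ S.xi q → p = q) (h3 : S.nMSP 3)
    {p q r : σ} (hpq : p ≠ q) (hr : r ∈ S.bar {p, q}) (hrp : r ≠ p) (hrq : r ≠ q) :
    q ∈ S.bar {p, r} := by
  have hcard : ({p, q} : Set σ).ncard ≤ 3 := by rw [Set.ncard_pair hpq]; norm_num
  have hp_ssubset : ({p} : Set σ) ⊂ {p, q} := by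
    rw [Set.pair_comm]; exact Set.ssubset_insert (Ne.symm hpq)
  have hq_ssubset : ({q} : Set σ) ⊂ {p, q} := Set.ssubset_insert hpq
  obtain ⟨t, htpr, htq⟩ := h3 {p, q} (Set.toFinite _) hcard r (S.minSup_pair hinj hr hrp hrq)
    {p} {q} hp_ssubset hq_ssubset (Set.singleton_inter_eq_empty.mpr hpq) rfl
  rw [S.bar_singleton hinj, Set.mem_singleton_iff] at htq
  rwa [htq] at htpr

theorem lamClosed_compl_of_bar_pair_eq (hinj : ∀ p q : σ, S.xi p ⊆ S.xi q → p = q)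
    (h3 : S.nMSP 3) {T : Set σ} (hiso : ∀ p ∈ T, ∀ q, q ∉ T → S.bar {p, q} = {p, q}) :
    S.lamClosed Tᶜ := by
  intro q hq q' hq' r hr hrT
  rw [← bar_pair] at hr
  obtain rfl | hqq' := eq_or_ne q q'
  · rw [Set.pair_eq_singleton, S.bar_singleton hinj, Set.mem_singleton_iff] at hr
    exact hq (hr ▸ hrT)
  have hq'_mem := S.mem_bar_pair_exchange hinj h3 hqq' hr (ne_of_mem_of_not_mem hrT hq)
    (ne_of_mem_of_not_mem hrT hq')
  rw [Set.pair_comm, hiso r hrT q hq] at hq'_mem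
  rcases hq'_mem with rfl | rfl
  exacts [hq' hrT, hqq' rfl]

theorem bar_pair_eq_of_lamClosed_compl (hinj : ∀ p q : σ, S.xi p ⊆ S.xi q → p = q)
    (h3 : S.nMSP 3) {T : Set σ} (hT : S.lamClosed T) (hTc : S.lamClosed Tᶜ)
    {p q : σ} (hp : p ∈ T) (hq : q ∉ T) : S.bar {p, q} = {p, q} := by
  refine Set.Subset.antisymm (fun r hr => ?_) (S.subset_bar _)
  by_contra hr_pair
  simp only [Set.mem_insert_iff, Set.mem_singleton_iff, not_or] at hr_pair
  obtain ⟨hrp, hrq⟩ := hr_pair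
  have hpq : p ≠ q := ne_of_mem_of_not_mem hp hq
  by_cases hrT : r ∈ T
  · have hq_mem := S.mem_bar_pair_exchange hinj h3 hpq hr hrp hrq
    rw [bar_pair] at hq_mem
    exact hq (hT p hp r hrT hq_mem)
  · rw [Set.pair_comm] at hr
    have hp_mem := S.mem_bar_pair_exchange hinj h3 hpq.symm hr hrq hrp
    rw [bar_pair] at hp_mem
    exact hTc q hq r hrT hp_mem hp

theorem sector_iff_lamClosed_compl (hinj : ∀ p q : σ, S.xi p ⊆ S.xi q → p = q)
    (h3 : S.nMSP 3) {T : Set σ} (hne : T.Nonempty) (hT : S.lamClosed T) (hSP : S.SPon T) :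
    S.Sector T ↔ S.lamClosed T ∧ S.lamClosed Tᶜ :=
  ⟨fun hsec => ⟨hT, S.lamClosed_compl_of_bar_pair_eq hinj h3 hsec.2.2.2⟩,
    fun ⟨_, hTc⟩ => ⟨hne, hT, hSP,
      fun _ hp _ hq => S.bar_pair_eq_of_lamClosed_compl hinj h3 hT hTc hp hq⟩⟩

end SPS

theorem stmt18_general (S : SPS σ L) (hA : S.propA) (h3 : S.nMSP 3)
    {ι : Type*} (T : ι → Set σ)
    (hne : ∀ i, (T i).Nonempty)
    (hclosed : ∀ i, S.lamClosed (T i))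
    (hSP : ∀ i, S.SPon (T i)) :
    (∀ i, S.Sector (T i)) ↔ (∀ i, S.lamClosed (T i) ∧ S.lamClosed (T i)ᶜ) :=
  forall_congr' fun i => S.sector_iff_lamClosed_compl hA.2 h3 (hne i) (hclosed i) (hSP i)

theorem stmt18 (S : SPS σ L) (hA : S.propA) (h3 : S.nMSP 3)
    {ι : Type*} (T : ι → Set σ)
    (hcover : (⋃ i, T i) = Set.univ)
    (hne : ∀ i, (T i).Nonempty)
    (hclosed : ∀ i, S.lamClosed (T i))
    (hSP : ∀ i, S.SPon (T i)) :
    (∀ i, S.Sector (T i)) ↔ (∀ i, S.lamClosed (T i) ∧ S.lamClosed (T i)ᶜ) :=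
  stmt18_general S hA h3 T hne hclosed hSP
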